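/- arXiv:2502.19317 — 5 statements merged into one kernel-verified Lean document; each statement's English description precedes it below -/
import Mathlib

section
/- If for some k > 0 the strategy μ^k is infeasible (it violates the budget constraint or the ROS constraint), then for every k' ≥ k the strategy μ^{k'} is also infeasible. Consequently, the set of k > 0 for which μ^k is feasible is downward closed, i.e., there is a threshold k* such that μ^k is feasible for every k ≤ k* and infeasible for every k > k*. -/
/-- The marginal cost of bid level `μ ≥ 1`:
`MC(μ) = (c(μ) − c(μ−1)) / (v(μ) − v(μ−1))`. -/
noncomputable def MC (c v : ℕ → ℝ) (μ : ℕ) : ℝ :=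
  (c μ - c (μ - 1)) / (v μ - v (μ - 1))

/-- The strategy `μ^k`: on each platform `j`, the largest bid level
`μ ∈ {0,…,n}` such that `μ = 0` or `MC_j(μ) ≤ k`. -/
noncomputable def muk {m : ℕ} (c v : Fin m → ℕ → ℝ) (n : ℕ) (k : ℝ) (j : Fin m) : ℕ :=
  Nat.findGreatest (fun s => MC (c j) (v j) s ≤ k) n

/-- An integral strategy is feasible if it satisfies the ROS constraint and the
budget constraint. -/
def Feasible {m : ℕ} (c v : Fin m → ℕ → ℝ) (B T : ℝ) (μ : Fin m → ℕ) : Prop :=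
  (∑ j, c j (μ j) ≤ T * ∑ j, v j (μ j)) ∧ (∑ j, c j (μ j) ≤ B)

lemma step_mono (f : ℕ → ℝ) (n : ℕ) (hf : ∀ μ < n, f μ < f (μ + 1))
    {a b : ℕ} (hab : a ≤ b) (hbn : b ≤ n) : f a ≤ f b := by
  induction b, hab using Nat.le_induction with
  | base => exact le_rfl
  | succ b hab ih =>
    have h1 := hf b (by omega)
    have h2 := ih (by omega)
    linarith

lemma tele_le (c v : ℕ → ℝ) (r : ℝ) {a b : ℕ} (hab : a ≤ b)
    (h : ∀ s, a < s → s ≤ b → r * (v s - v (s - 1)) ≤ c s - c (s - 1)) :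
    r * (v b - v a) ≤ c b - c a := by
  induction b, hab using Nat.le_induction with
  | base => simp
  | succ b hab ih =>
    have h1 := h (b + 1) (by omega) le_rfl
    simp only [Nat.add_sub_cancel] at h1
    have h2 := ih (fun s hs hsb => h s hs (by omega))
    have : r * (v (b + 1) - v a) = r * (v (b + 1) - v b) + r * (v b - v a) := by ring
    linarith

lemma tele_ge (c v : ℕ → ℝ) (r : ℝ) {a b : ℕ} (hab : a ≤ b)
    (h : ∀ s, a < s → s ≤ b → c s - c (s - 1) ≤ r * (v s - v (s - 1))) :
    c b - c a ≤ r * (v b - v a) := by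
  induction b, hab using Nat.le_induction with
  | base => simp
  | succ b hab ih =>
    have h1 := h (b + 1) (by omega) le_rfl
    simp only [Nat.add_sub_cancel] at h1
    have h2 := ih (fun s hs hsb => h s hs (by omega))
    have : r * (v (b + 1) - v a) = r * (v (b + 1) - v b) + r * (v b - v a) := by ring
    linarith

lemma MC_chain (c v : ℕ → ℝ) (n : ℕ)
    (hmono : ∀ μ, 1 ≤ μ → μ < n → MC c v μ ≤ MC c v (μ + 1))
    {s t : ℕ} (hs : 1 ≤ s) (hst : s ≤ t) (htn : t ≤ n) : MC c v s ≤ MC c v t := by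
  induction t, hst using Nat.le_induction with
  | base => exact le_rfl
  | succ t hst ih =>
    have h1 := hmono t (by omega) (by omega)
    have h2 := ih (by omega)
    linarith

/-- If for some `k > 0` the strategy `μ^k` is infeasible, then for every `k' ≥ k`
the strategy `μ^{k'}` is also infeasible. Consequently, the set of `k > 0` for
which `μ^k` is feasible is downward closed. -/
theorem muk_infeasible_upward_closed
    (m n : ℕ) (c v : Fin m → ℕ → ℝ)
    (hc0 : ∀ j, c j 0 = 0) (hv0 : ∀ j, v j 0 = 0)
    (hc : ∀ j, ∀ μ < n, c j μ < c j (μ + 1)) (hv : ∀ j, ∀ μ < n, v j μ < v j (μ + 1))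
    (hmono : ∀ j, ∀ μ, 1 ≤ μ → μ < n → MC (c j) (v j) μ ≤ MC (c j) (v j) (μ + 1))
    (B T : ℝ) (hB : 0 ≤ B) (hT : 0 < T) :
    (∀ k k' : ℝ, 0 < k → k ≤ k' →
        ¬ Feasible c v B T (muk c v n k) → ¬ Feasible c v B T (muk c v n k')) ∧
    (∀ k k' : ℝ, 0 < k → k ≤ k' →
        Feasible c v B T (muk c v n k') → Feasible c v B T (muk c v n k)) := by
  have main : ∀ k k' : ℝ, 0 < k → k ≤ k' →
      ¬ Feasible c v B T (muk c v n k) → ¬ Feasible c v B T (muk c v n k') := by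
    intro k k' hk hkk' hinf
    set μ1 := muk c v n k with hμ1def
    set μ2 := muk c v n k' with hμ2def
    have hμ1n : ∀ j, μ1 j ≤ n := fun j => Nat.findGreatest_le n
    have hμ2n : ∀ j, μ2 j ≤ n := fun j => Nat.findGreatest_le n
    have h12 : ∀ j, μ1 j ≤ μ2 j := by
      intro j
      exact Nat.findGreatest_mono (fun s hs => le_trans hs hkk') le_rfl
    -- Δc = MC * Δv for 1 ≤ s ≤ n
    have hΔ : ∀ j, ∀ s, 1 ≤ s → s ≤ n →
        c j s - c j (s - 1) = MC (c j) (v j) s * (v j s - v j (s - 1)) := by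
      intro j s h1 h2
      have hvlt : v j (s - 1) < v j s := by
        have := hv j (s - 1) (by omega)
        have hs : s - 1 + 1 = s := by omega
        rwa [hs] at this
      unfold MC
      rw [div_mul_cancel₀]
      exact sub_ne_zero_of_ne (ne_of_gt hvlt)
    have hΔv : ∀ j, ∀ s, 1 ≤ s → s ≤ n → 0 < v j s - v j (s - 1) := by
      intro j s h1 h2
      have := hv j (s - 1) (by omega)
      have hs : s - 1 + 1 = s := by omega
      rw [hs] at this
      linarith
    -- MC at included levels is ≤ k
    have hMCle : ∀ j, ∀ s, 1 ≤ s → s ≤ μ1 j → MC (c j) (v j) s ≤ k := by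
      intro j s h1 h2
      have hpos : 0 < μ1 j := by omega
      have hspec : MC (c j) (v j) (μ1 j) ≤ k :=
        Nat.findGreatest_of_ne_zero (P := fun s => MC (c j) (v j) s ≤ k) rfl (by omega)
      exact le_trans (MC_chain (c j) (v j) n (hmono j) h1 h2 (hμ1n j)) hspec
    -- MC at levels above μ1 is > k
    have hMCgt : ∀ j, ∀ s, μ1 j < s → s ≤ n → k < MC (c j) (v j) s := by
      intro j s h1 h2
      by_contra hcon
      push_neg at hcon
      have hle : s ≤ μ1 j :=
        Nat.le_findGreatest (P := fun s => MC (c j) (v j) s ≤ k) h2 hcon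
      omega
    -- cost ≤ k * value at μ1
    have hck : ∀ j, c j (μ1 j) ≤ k * v j (μ1 j) := by
      intro j
      have := tele_ge (c j) (v j) k (Nat.zero_le (μ1 j)) (by
        intro s hs hsb
        rw [hΔ j s (by omega) (le_trans hsb (hμ1n j))]
        have h1 := hMCle j s (by omega) hsb
        have h2 := hΔv j s (by omega) (le_trans hsb (hμ1n j))
        nlinarith)
      rw [hc0 j, hv0 j] at this
      linarith
    have hvnn : ∀ j, 0 ≤ v j (μ1 j) := by
      intro j
      have := step_mono (v j) n (hv j) (Nat.zero_le (μ1 j)) (hμ1n j)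
      rw [hv0 j] at this
      exact this
    have hcmono : ∀ j, c j (μ1 j) ≤ c j (μ2 j) :=
      fun j => step_mono (c j) n (hc j) (h12 j) (hμ2n j)
    rcases not_and_or.mp hinf with hROS | hBud
    · -- ROS violated at μ1
      push_neg at hROS
      -- Σ c(μ1) ≤ k Σ v(μ1)
      have hsum : ∑ j, c j (μ1 j) ≤ k * ∑ j, v j (μ1 j) := by
        rw [Finset.mul_sum]
        exact Finset.sum_le_sum (fun j _ => hck j)
      have hvsum : 0 ≤ ∑ j, v j (μ1 j) := Finset.sum_nonneg (fun j _ => hvnn j)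
      have hkT : T < k := by
        by_contra hcon
        push_neg at hcon
        have : k * ∑ j, v j (μ1 j) ≤ T * ∑ j, v j (μ1 j) :=
          mul_le_mul_of_nonneg_right hcon hvsum
        linarith
      -- per-platform: T*(v(μ2)-v(μ1)) ≤ c(μ2)-c(μ1)
      have hstep : ∀ j, T * (v j (μ2 j) - v j (μ1 j)) ≤ c j (μ2 j) - c j (μ1 j) := by
        intro j
        apply tele_le (c j) (v j) T (h12 j)
        intro s hs hsb
        rw [hΔ j s (by omega) (le_trans hsb (hμ2n j))]
        have h1 := hMCgt j s hs (le_trans hsb (hμ2n j))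
        have h2 := hΔv j s (by omega) (le_trans hsb (hμ2n j))
        nlinarith
      have hsum2 : T * (∑ j, v j (μ2 j)) - T * (∑ j, v j (μ1 j)) ≤
          (∑ j, c j (μ2 j)) - (∑ j, c j (μ1 j)) := by
        calc T * ∑ j, v j (μ2 j) - T * ∑ j, v j (μ1 j)
            = ∑ j, T * (v j (μ2 j) - v j (μ1 j)) := by
              rw [Finset.mul_sum, Finset.mul_sum, ← Finset.sum_sub_distrib]
              exact Finset.sum_congr rfl (fun j _ => by ring)
          _ ≤ ∑ j, (c j (μ2 j) - c j (μ1 j)) := Finset.sum_le_sum (fun j _ => hstep j)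
          _ = (∑ j, c j (μ2 j)) - (∑ j, c j (μ1 j)) := Finset.sum_sub_distrib _ _
      intro hfeas
      have := hfeas.1
      linarith
    · -- budget violated at μ1
      push_neg at hBud
      have : ∑ j, c j (μ1 j) ≤ ∑ j, c j (μ2 j) :=
        Finset.sum_le_sum (fun j _ => hcmono j)
      intro hfeas
      have := hfeas.2
      linarith
  refine ⟨main, ?_⟩
  intro k k' hk hkk' hfeas'
  by_contra hnf
  exact main k k' hk hkk' hnf hfeas'
end

section
/- A strategy μ ∈ {0,…,n}^m is of the form μ^k for some k > 0 if and only if for every platform j with μ_j < n and every platform i with μ_i ≥ 1, it holds that MC_j(μ_j + 1) > MC_i(μ_i). (This is the correctness criterion underlying the OptCheck subroutine's test of whether a profile equals μ^k for some k.) -/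
lemma MC_pos {c v : ℕ → ℝ} {n : ℕ}
    (hc : ∀ μ < n, c μ < c (μ + 1)) (hv : ∀ μ < n, v μ < v (μ + 1))
    {s : ℕ} (h1 : 1 ≤ s) (h2 : s ≤ n) : 0 < MC c v s := by
  have hs : s - 1 < n := by omega
  have hs1 : s - 1 + 1 = s := by omega
  have h1 := hc _ hs
  have h2 := hv _ hs
  rw [hs1] at h1 h2
  exact div_pos (by linarith) (by linarith)

lemma MC_mono {c v : ℕ → ℝ} {n : ℕ}
    (hmono : ∀ μ, 1 ≤ μ → μ < n → MC c v μ ≤ MC c v (μ + 1))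
    {a b : ℕ} (h1 : 1 ≤ a) (hab : a ≤ b) (hbn : b ≤ n) : MC c v a ≤ MC c v b := by
  induction b with
  | zero => omega
  | succ b ih =>
    rcases Nat.eq_or_lt_of_le hab with h | h
    · rw [h]
    · exact le_trans (ih (by omega) (by omega)) (hmono b (by omega) (by omega))

/-- A strategy `μ ∈ {0,…,n}^m` is of the form `μ^k` for some `k > 0` if and only
if for every platform `j` with `μ_j < n` and every platform `i` with `μ_i ≥ 1`,
`MC_j(μ_j + 1) > MC_i(μ_i)`. -/
theorem muk_characterization
    (m n : ℕ) (c v : Fin m → ℕ → ℝ)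
    (hc0 : ∀ j, c j 0 = 0) (hv0 : ∀ j, v j 0 = 0)
    (hc : ∀ j, ∀ μ < n, c j μ < c j (μ + 1)) (hv : ∀ j, ∀ μ < n, v j μ < v j (μ + 1))
    (hmono : ∀ j, ∀ μ, 1 ≤ μ → μ < n → MC (c j) (v j) μ ≤ MC (c j) (v j) (μ + 1))
    (μ : Fin m → ℕ) (hle : ∀ j, μ j ≤ n) :
    (∃ k : ℝ, 0 < k ∧ μ = muk c v n k) ↔
      (∀ j i, μ j < n → 1 ≤ μ i → MC (c i) (v i) (μ i) < MC (c j) (v j) (μ j + 1)) := by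
  constructor
  · rintro ⟨k, hk, rfl⟩ j i hj hi
    unfold muk at hj hi ⊢
    have hgt : ¬ MC (c j) (v j)
        (Nat.findGreatest (fun s => MC (c j) (v j) s ≤ k) n + 1) ≤ k :=
      Nat.findGreatest_is_greatest (P := fun s => MC (c j) (v j) s ≤ k) (n := n)
        (k := Nat.findGreatest (fun s => MC (c j) (v j) s ≤ k) n + 1)
        (by omega) (by omega)
    have hP : MC (c i) (v i)
        (Nat.findGreatest (fun s => MC (c i) (v i) s ≤ k) n) ≤ k :=
      Nat.findGreatest_of_ne_zero (P := fun s => MC (c i) (v i) s ≤ k) (n := n)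
        rfl (by omega)
    push_neg at hgt
    linarith
  · intro h
    by_cases hS : ∀ j, μ j = n
    · refine ⟨1 + ∑ j, |MC (c j) (v j) n|, by positivity, ?_⟩
      funext j
      have hPn : MC (c j) (v j) n ≤ 1 + ∑ j, |MC (c j) (v j) n| := by
        have h1 : MC (c j) (v j) n ≤ |MC (c j) (v j) n| := le_abs_self _
        have h2 : |MC (c j) (v j) n| ≤ ∑ j, |MC (c j) (v j) n| :=
          Finset.single_le_sum (f := fun i => |MC (c i) (v i) n|)
            (fun i _ => abs_nonneg _) (Finset.mem_univ j)
        linarith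
      have h1 : n ≤ muk c v n (1 + ∑ j, |MC (c j) (v j) n|) j :=
        Nat.le_findGreatest le_rfl hPn
      have h2 : muk c v n (1 + ∑ j, |MC (c j) (v j) n|) j ≤ n :=
        Nat.findGreatest_le n
      have := hS j
      omega
    · push_neg at hS
      obtain ⟨j0, hj0⟩ := hS
      have hj0 : μ j0 < n := lt_of_le_of_ne (hle j0) hj0
      set S : Finset (Fin m) := Finset.univ.filter (fun j => μ j < n) with hSdef
      have hSne : S.Nonempty := ⟨j0, by simp [hSdef, hj0]⟩
      set K : ℝ := S.inf' hSne (fun j => MC (c j) (v j) (μ j + 1)) with hKdef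
      have hKpos : 0 < K := by
        obtain ⟨j, hjS, hje⟩ := Finset.exists_mem_eq_inf' hSne
          (fun j => MC (c j) (v j) (μ j + 1))
        rw [hKdef, hje]
        have hjn : μ j < n := by simpa [hSdef] using hjS
        exact MC_pos (hc j) (hv j) (by omega) (by omega)
      have hmne : (Finset.univ : Finset (Fin m)).Nonempty :=
        ⟨j0, Finset.mem_univ _⟩
      set M : ℝ := Finset.univ.sup' hmne
        (fun i => if 1 ≤ μ i then MC (c i) (v i) (μ i) else 0) with hMdef
      have hMK : M < K := by
        rw [hMdef]
        rw [Finset.sup'_lt_iff]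
        intro i _
        by_cases hi : 1 ≤ μ i
        · simp only [hi, if_true]
          rw [hKdef, Finset.lt_inf'_iff]
          intro j hjS
          exact h j i (by simpa [hSdef] using hjS) hi
        · simpa [hi] using hKpos
      set k : ℝ := (max M 0 + K) / 2 with hkdef
      have hk0 : 0 < k := by
        have : (0:ℝ) ≤ max M 0 := le_max_right _ _
        rw [hkdef]; linarith
      have hMk : max M 0 ≤ k := by
        have h1 : max M 0 < K := max_lt hMK hKpos
        rw [hkdef]; linarith
      have hkK : k < K := by
        have h1 : max M 0 < K := max_lt hMK hKpos
        rw [hkdef]; linarith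
      refine ⟨k, hk0, ?_⟩
      funext i
      have hupper : muk c v n k i ≤ μ i := by
        by_cases hin : μ i < n
        · by_contra hcon
          push_neg at hcon
          have hmem : muk c v n k i ≤ n := Nat.findGreatest_le _
          have hP : MC (c i) (v i) (muk c v n k i) ≤ k :=
            Nat.findGreatest_of_ne_zero (P := fun s => MC (c i) (v i) s ≤ k)
              (n := n) rfl (by omega)
          have hKle : K ≤ MC (c i) (v i) (μ i + 1) :=
            Finset.inf'_le _ (by simp [hSdef, hin])
          have hmc : MC (c i) (v i) (μ i + 1) ≤ MC (c i) (v i) (muk c v n k i) :=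
            MC_mono (hmono i) (by omega) (by omega) hmem
          linarith
        · have h1 : muk c v n k i ≤ n := Nat.findGreatest_le n
          have := hle i
          omega
      have hlower : μ i ≤ muk c v n k i := by
        by_cases hi : 1 ≤ μ i
        · have hPi : MC (c i) (v i) (μ i) ≤ k := by
            have h1 : MC (c i) (v i) (μ i) ≤ M := by
              rw [hMdef]
              have := Finset.le_sup' (fun i => if 1 ≤ μ i then
                MC (c i) (v i) (μ i) else 0) (Finset.mem_univ i)
              simp only [hi, ↓reduceIte] at this; exact this
            calc MC (c i) (v i) (μ i) ≤ M := h1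
              _ ≤ max M 0 := le_max_left _ _
              _ ≤ k := hMk
          exact Nat.le_findGreatest (hle i) hPi
        · omega
      omega
end

section
/- The feasible region of the fractional program is not downward-closed: in the instance with two platforms and n = 2 bid levels, where c_1(μ) = μ, v_1(μ) = (8/3)μ, c_2(μ) = μ, v_2(μ) = μ on {0,1,2} (extended by linear interpolation), budget B = 10 and target ROS T = 1/2, the fractional strategy (3/2, 1) is feasible, but the coordinatewise smaller strategy (1, 1) is infeasible (it violates the ROS constraint). -/
/-! Interpolating a linear sequence gives back the linear function, so all quantities are
explicit: at `(3/2, 1)` the cost `5/2` equals `(1/2)·(4 + 1)`, while at `(1, 1)` the cost `2`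
exceeds `(1/2)·(8/3 + 1) = 11/6`. -/

/-- Linear interpolation of `f : ℕ → ℝ` to nonnegative reals:
for `⌊x⌋ ≤ x ≤ ⌊x⌋ + 1`,
`interp f x = (⌈x⌉ − x)·f(⌊x⌋) + (x − ⌊x⌋)·f(⌈x⌉)`. -/
noncomputable def interp (f : ℕ → ℝ) (x : ℝ) : ℝ :=
  f ⌊x⌋₊ + (x - ⌊x⌋₊) * (f (⌊x⌋₊ + 1) - f ⌊x⌋₊)

theorem interp_eq_mul_of_eq_mul {f : ℕ → ℝ} {a : ℝ} (hf : ∀ n, f n = a * n) (x : ℝ) :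
    interp f x = a * x := by
  simp only [interp, hf]
  push_cast
  ring

theorem interp_eq_self_of_eq_self {f : ℕ → ℝ} (hf : ∀ n, f n = n) (x : ℝ) :
    interp f x = x := by
  simpa using interp_eq_mul_of_eq_mul (a := 1) (by simpa using hf) x

/-- The feasible region is not downward-closed: in the two-platform instance
with `c₁(μ) = μ`, `v₁(μ) = (8/3)μ`, `c₂(μ) = μ`, `v₂(μ) = μ`, budget `B = 10`
and target ROS `T = 1/2`, the fractional strategy `(3/2, 1)` is feasible, but
the coordinatewise smaller strategy `(1, 1)` is infeasible: it violates the
ROS constraint. -/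
theorem feasible_region_not_downward_closed
    (c₁ v₁ c₂ v₂ : ℕ → ℝ)
    (hc₁ : ∀ μ, c₁ μ = μ) (hv₁ : ∀ μ, v₁ μ = (8 / 3) * μ)
    (hc₂ : ∀ μ, c₂ μ = μ) (hv₂ : ∀ μ, v₂ μ = μ) :
    (interp c₁ (3 / 2) + interp c₂ 1 ≤
        (1 / 2) * (interp v₁ (3 / 2) + interp v₂ 1) ∧
      interp c₁ (3 / 2) + interp c₂ 1 ≤ 10) ∧
    ¬ (interp c₁ 1 + interp c₂ 1 ≤ (1 / 2) * (interp v₁ 1 + interp v₂ 1) ∧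
        interp c₁ 1 + interp c₂ 1 ≤ 10) ∧
    (1 / 2) * (interp v₁ 1 + interp v₂ 1) < interp c₁ 1 + interp c₂ 1 := by
  simp only [interp_eq_self_of_eq_self hc₁, interp_eq_self_of_eq_self hc₂,
    interp_eq_self_of_eq_self hv₂, interp_eq_mul_of_eq_mul hv₁]
  norm_num
end

section
/- For every platform j, the cost-per-value ratio of the continuous (linearly interpolated) extension is nondecreasing: for all real μ, μ' with 0 < μ ≤ μ' ≤ n, c_j(μ)/v_j(μ) ≤ c_j(μ')/v_j(μ'). -/
/-!
Since `MC` is nondecreasing, the average cost `c k / v k` never exceeds the next marginal cost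
`MC (k + 1)`. On a segment `[k, k + 1]` both interpolants are affine, and a ratio of positive
affine functions `(a + t p) / (b + t q)` is nondecreasing in `t` as soon as `a / b ≤ p / q`, which
is that average-below-marginal inequality. Monotonicity on the segments glues to all of `(0, n]`.
-/

open Set

lemma interp_natCast (f : ℕ → ℝ) (k : ℕ) : interp f k = f k := by
  simp [interp]

lemma interp_eq_of_mem_Icc (f : ℕ → ℝ) {k : ℕ} {x : ℝ} (hx : x ∈ Icc (k : ℝ) (k + 1)) :
    interp f x = f k + (x - k) * (f (k + 1) - f k) := by
  rcases hx.2.eq_or_lt with rfl | hlt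
  · rw [← Nat.cast_succ, interp_natCast, Nat.cast_succ]
    ring
  · have hfloor : ⌊x⌋₊ = k :=
      (Nat.floor_eq_iff ((Nat.cast_nonneg k).trans hx.1)).2 ⟨hx.1, hlt⟩
    simp [interp, hfloor]

lemma affine_div_le_affine_div {a b p q s t : ℝ} (hapbq : a * q ≤ p * b) (hst : s ≤ t)
    (hs : 0 < b + s * q) (ht : 0 < b + t * q) :
    (a + s * p) / (b + s * q) ≤ (a + t * p) / (b + t * q) := by
  rw [div_le_div_iff₀ hs ht]
  nlinarith [mul_le_mul_of_nonneg_left hapbq (sub_nonneg.2 hst)]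

section

variable {n : ℕ} {c v : ℕ → ℝ}

lemma pos_of_eq_zero_of_lt_succ (hv0 : v 0 = 0) (hv : ∀ μ < n, v μ < v (μ + 1))
    {k : ℕ} (hk : 0 < k) (hkn : k ≤ n) : 0 < v k := by
  have hstrict : StrictMonoOn v (Iic n) := strictMonoOn_Iic_of_lt_succ fun m hm ↦ hv m hm
  simpa [hv0] using hstrict (Nat.zero_le n) hkn hk

lemma nonneg_of_eq_zero_of_lt_succ (hv0 : v 0 = 0) (hv : ∀ μ < n, v μ < v (μ + 1))
    {k : ℕ} (hkn : k ≤ n) : 0 ≤ v k := by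
  rcases k.eq_zero_or_pos with rfl | hk
  · exact hv0.ge
  · exact (pos_of_eq_zero_of_lt_succ hv0 hv hk hkn).le

lemma average_le_marginal_cost (hc0 : c 0 = 0) (hv0 : v 0 = 0)
    (hv : ∀ μ < n, v μ < v (μ + 1))
    (hmono : ∀ μ, 1 ≤ μ → μ < n → MC c v μ ≤ MC c v (μ + 1)) :
    ∀ k < n, c k * (v (k + 1) - v k) ≤ (c (k + 1) - c k) * v k := by
  intro k
  induction k with
  | zero => simp [hc0, hv0]
  | succ m ih =>
    intro hm
    have hdv : 0 < v (m + 1) - v m := sub_pos.2 (hv m (by omega))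
    have hdv' : 0 < v (m + 2) - v (m + 1) := sub_pos.2 (hv (m + 1) hm)
    have hvm : 0 ≤ v m := nonneg_of_eq_zero_of_lt_succ hv0 hv (by omega)
    have hmc := hmono (m + 1) (by omega) hm
    simp only [MC, Nat.add_sub_cancel] at hmc
    rw [div_le_div_iff₀ hdv hdv'] at hmc
    -- multiply the induction hypothesis by the next value step and divide by the current one
    have hscaled : c m * (v (m + 2) - v (m + 1)) ≤ (c (m + 2) - c (m + 1)) * v m := by
      refine le_of_mul_le_mul_right ?_ hdv
      nlinarith [mul_le_mul_of_nonneg_right (ih (by omega)) hdv'.le,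
        mul_le_mul_of_nonneg_right hmc hvm]
    nlinarith

lemma interp_div_monotoneOn_segment (hc0 : c 0 = 0) (hv0 : v 0 = 0)
    (hv : ∀ μ < n, v μ < v (μ + 1))
    (hmono : ∀ μ, 1 ≤ μ → μ < n → MC c v μ ≤ MC c v (μ + 1)) {k : ℕ} (hk : k < n) :
    MonotoneOn (fun x ↦ interp c x / interp v x) (Ioi 0 ∩ Icc (k : ℝ) (k + 1)) := by
  have hdv : 0 < v (k + 1) - v k := sub_pos.2 (hv k hk)
  have hpos : ∀ x ∈ Ioi 0 ∩ Icc (k : ℝ) (k + 1), 0 < v k + (x - k) * (v (k + 1) - v k) := by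
    rintro x ⟨hx0, hxk, -⟩
    rcases k.eq_zero_or_pos with rfl | hk0
    · simpa [hv0] using mul_pos hx0 hdv
    · have := pos_of_eq_zero_of_lt_succ hv0 hv hk0 hk.le
      nlinarith
  intro x hx y hy hxy
  simp only [interp_eq_of_mem_Icc _ hx.2, interp_eq_of_mem_Icc _ hy.2]
  exact affine_div_le_affine_div (average_le_marginal_cost hc0 hv0 hv hmono k hk)
    (by linarith) (hpos x hx) (hpos y hy)

lemma interp_div_monotoneOn_Ioc (hc0 : c 0 = 0) (hv0 : v 0 = 0)
    (hv : ∀ μ < n, v μ < v (μ + 1))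
    (hmono : ∀ μ, 1 ≤ μ → μ < n → MC c v μ ≤ MC c v (μ + 1)) {k : ℕ} (hk : k < n) :
    MonotoneOn (fun x ↦ interp c x / interp v x) (Ioc 0 ((k : ℝ) + 1)) := by
  induction k with
  | zero =>
    refine (interp_div_monotoneOn_segment hc0 hv0 hv hmono hk).mono fun x hx ↦ ?_
    exact ⟨hx.1, by simpa using hx.1.le, hx.2⟩
  | succ m ih =>
    have hseg :
        MonotoneOn (fun x ↦ interp c x / interp v x) (Icc ((m : ℝ) + 1) (m + 1 + 1)) := by
      refine (interp_div_monotoneOn_segment hc0 hv0 hv hmono hk).mono fun x hx ↦ ?_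
      exact ⟨(by positivity : (0 : ℝ) < m + 1).trans_le hx.1, by simpa using hx⟩
    rw [Nat.cast_succ, ← Ioc_union_Icc_eq_Ioc (b := (m : ℝ) + 1) (by positivity) (by linarith)]
    exact (ih (by omega)).union_right hseg (isGreatest_Ioc (by positivity))
      (isLeast_Icc (by linarith))

end

theorem interp_cost_per_value_monotone_general
    (n : ℕ) (c v : ℕ → ℝ)
    (hc0 : c 0 = 0) (hv0 : v 0 = 0)
    (hv : ∀ μ < n, v μ < v (μ + 1))
    (hmono : ∀ μ, 1 ≤ μ → μ < n → MC c v μ ≤ MC c v (μ + 1))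
    (x y : ℝ) (hx : 0 < x) (hxy : x ≤ y) (hy : y ≤ n) :
    interp c x / interp v x ≤ interp c y / interp v y := by
  obtain ⟨k, rfl⟩ : ∃ k, n = k + 1 :=
    Nat.exists_eq_add_one.2 (by exact_mod_cast hx.trans_le (hxy.trans hy))
  have hmonoOn := interp_div_monotoneOn_Ioc hc0 hv0 hv hmono (Nat.lt_succ_self k)
  push_cast at hy
  exact hmonoOn ⟨hx, hxy.trans hy⟩ ⟨hx.trans_le hxy, hy⟩ hxy

/-- The cost-per-value ratio of the continuous (linearly interpolated)
extension is nondecreasing: for `0 < μ ≤ μ' ≤ n`,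
`c(μ)/v(μ) ≤ c(μ')/v(μ')`. -/
theorem interp_cost_per_value_monotone
    (n : ℕ) (c v : ℕ → ℝ)
    (hc0 : c 0 = 0) (hv0 : v 0 = 0)
    (hc : ∀ μ < n, c μ < c (μ + 1)) (hv : ∀ μ < n, v μ < v (μ + 1))
    (hmono : ∀ μ, 1 ≤ μ → μ < n → MC c v μ ≤ MC c v (μ + 1))
    (x y : ℝ) (hx : 0 < x) (hxy : x ≤ y) (hy : y ≤ n) :
    interp c x / interp v x ≤ interp c y / interp v y :=
  interp_cost_per_value_monotone_general n c v hc0 hv0 hv hmono x y hx hxy hy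
end

section
/- Threshold greedy optimality under a binding ROS constraint: let μ ∈ [0,n]^m be a fractional strategy with Σ_j c_j(μ_j) = T·Σ_j v_j(μ_j) and Σ_j c_j(μ_j) ≤ B, and suppose there exists t > T such that for every platform j and every integer s ∈ {1,…,n}: if s − 1 < μ_j then MC_j(s) ≤ t, and if s > μ_j then MC_j(s) ≥ t. Then every feasible fractional strategy μ^a ∈ [0,n]^m (i.e., with Σ_j c_j(μ^a_j) ≤ T·Σ_j v_j(μ^a_j) and Σ_j c_j(μ^a_j) ≤ B) satisfies Σ_j v_j(μ^a_j) ≤ Σ_j v_j(μ_j). -/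
/-!
Let `f_j = c_j − t·v_j`. On the steps used by `μ_j` we have `MC_j ≤ t`, so `f_j` decreases there,
and on the unused steps `MC_j ≥ t`, so it increases: hence `μ_j` minimises the piecewise linear
`f_j` on `[0, n]`. Summing over platforms, `C(μ) − t·V(μ) ≤ C(μᵃ) − t·V(μᵃ)`, and with
`C(μ) = T·V(μ)`, `C(μᵃ) ≤ T·V(μᵃ)` this gives `(t − T)·V(μᵃ) ≤ (t − T)·V(μ)`.
-/

lemma isMinOn_Iic_of_succ_le_of_le_succ {β : Type*} [Preorder β] {f : ℕ → β} {k n : ℕ}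
    (hkn : k ≤ n) (hdown : ∀ s < k, f (s + 1) ≤ f s)
    (hup : ∀ s, k ≤ s → s < n → f s ≤ f (s + 1)) :
    IsMinOn f (Set.Iic n) k := by
  intro a (ha : a ≤ n)
  rcases le_total a k with hak | hka
  · refine antitoneOn_of_succ_le Set.ordConnected_Iic (fun s _ _ hs => ?_)
      (Set.mem_Iic.2 hak) (Set.mem_Iic.2 le_rfl) hak
    rw [Order.succ_eq_add_one] at hs ⊢
    exact hdown s hs
  · refine monotoneOn_of_le_succ Set.ordConnected_Icc (fun s _ hs hs' => ?_)
      ⟨le_rfl, hkn⟩ ⟨hka, ha⟩ hka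
    rw [Order.succ_eq_add_one] at hs' ⊢
    exact hup s hs.1 hs'.2

lemma interp_sub_mul (c v : ℕ → ℝ) (t x : ℝ) :
    interp (fun s => c s - t * v s) x = interp c x - t * interp v x := by
  simp only [interp]; ring

lemma interp_eq_convex_combination (f : ℕ → ℝ) (x : ℝ) :
    interp f x = (1 - (x - ⌊x⌋₊)) * f ⌊x⌋₊ + (x - ⌊x⌋₊) * f (⌊x⌋₊ + 1) := by
  simp only [interp]; ring

section Bounds

variable {f : ℕ → ℝ} {x a : ℝ}

lemma interp_le_of_le (hx : 0 ≤ x) (h₀ : f ⌊x⌋₊ ≤ a)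
    (h₁ : (⌊x⌋₊ : ℝ) < x → f (⌊x⌋₊ + 1) ≤ a) : interp f x ≤ a := by
  have hθ₁ : x - ⌊x⌋₊ < 1 := by linarith [Nat.lt_floor_add_one x]
  rcases (Nat.floor_le hx).eq_or_lt with hint | hfrac
  · have hθ : x - ⌊x⌋₊ = 0 := by linarith
    simpa only [interp, hθ, zero_mul, add_zero] using h₀
  · rw [interp_eq_convex_combination]
    nlinarith [h₁ hfrac]

lemma le_interp_of_le (hx : 0 ≤ x) (h₀ : a ≤ f ⌊x⌋₊)
    (h₁ : (⌊x⌋₊ : ℝ) < x → a ≤ f (⌊x⌋₊ + 1)) : a ≤ interp f x := by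
  have hθ₁ : x - ⌊x⌋₊ < 1 := by linarith [Nat.lt_floor_add_one x]
  rcases (Nat.floor_le hx).eq_or_lt with hint | hfrac
  · have hθ : x - ⌊x⌋₊ = 0 := by linarith
    simpa only [interp, hθ, zero_mul, add_zero] using h₀
  · rw [interp_eq_convex_combination]
    nlinarith [h₁ hfrac]

end Bounds

lemma Nat.lt_of_cast_lt_of_le {k n : ℕ} {x : ℝ} (hk : (k : ℝ) < x) (hx : x ≤ n) : k < n := by
  exact_mod_cast hk.trans_le hx

lemma isMinOn_interp_of_steps (f : ℕ → ℝ) {n : ℕ} {μ : ℝ} (hμ : μ ∈ Set.Icc 0 (n : ℝ))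
    (hdown : ∀ s < n, (s : ℝ) < μ → f (s + 1) ≤ f s)
    (hup : ∀ s < n, μ < s + 1 → f s ≤ f (s + 1)) :
    IsMinOn (interp f) (Set.Icc 0 (n : ℝ)) μ := by
  have hkn : ⌊μ⌋₊ ≤ n := Nat.floor_le_of_le hμ.2
  have hmin : IsMinOn f (Set.Iic n) ⌊μ⌋₊ :=
    isMinOn_Iic_of_succ_le_of_le_succ hkn
      (fun s hs => hdown s (by omega) (Nat.lt_of_lt_floor hs))
      (fun s hks hsn => hup s hsn <|
        (Nat.lt_floor_add_one μ).trans_le <| add_le_add_left (Nat.cast_le.2 hks) 1)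
  intro x hx
  calc interp f μ ≤ f ⌊μ⌋₊ :=
        interp_le_of_le hμ.1 le_rfl fun h => hdown _ (Nat.lt_of_cast_lt_of_le h hμ.2) h
    _ ≤ interp f x :=
        le_interp_of_le hx.1 (hmin (Nat.floor_le_of_le hx.2))
          fun h => hmin (Nat.lt_of_cast_lt_of_le h hx.2)

lemma MC_succ_le_iff {c v : ℕ → ℝ} {s : ℕ} (hv : v s < v (s + 1)) {t : ℝ} :
    MC c v (s + 1) ≤ t ↔ c (s + 1) - t * v (s + 1) ≤ c s - t * v s := by
  rw [MC, Nat.add_sub_cancel, div_le_iff₀ (sub_pos.2 hv)]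
  constructor <;> intro h <;> linarith

lemma le_MC_succ_iff {c v : ℕ → ℝ} {s : ℕ} (hv : v s < v (s + 1)) {t : ℝ} :
    t ≤ MC c v (s + 1) ↔ c s - t * v s ≤ c (s + 1) - t * v (s + 1) := by
  rw [MC, Nat.add_sub_cancel, le_div_iff₀ (sub_pos.2 hv)]
  constructor <;> intro h <;> linarith

theorem threshold_greedy_optimal_ros_binding_general
    (m n : ℕ) (c v : Fin m → ℕ → ℝ)
    (hv : ∀ j, ∀ s < n, v j s < v j (s + 1))
    (T : ℝ)
    (μ : Fin m → ℝ) (hbox : ∀ j, 0 ≤ μ j ∧ μ j ≤ n)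
    (hbind : ∑ j, interp (c j) (μ j) = T * ∑ j, interp (v j) (μ j))
    (t : ℝ) (ht : T < t)
    (hthresh : ∀ j, ∀ s : ℕ, 1 ≤ s → s ≤ n →
      (((s : ℝ) - 1 < μ j → MC (c j) (v j) s ≤ t) ∧
        (μ j < (s : ℝ) → t ≤ MC (c j) (v j) s)))
    (μa : Fin m → ℝ) (hboxa : ∀ j, 0 ≤ μa j ∧ μa j ≤ n)
    (hrosa : ∑ j, interp (c j) (μa j) ≤ T * ∑ j, interp (v j) (μa j)) :
    ∑ j, interp (v j) (μa j) ≤ ∑ j, interp (v j) (μ j) := by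
  have hmin : ∀ j, interp (c j) (μ j) - t * interp (v j) (μ j) ≤
      interp (c j) (μa j) - t * interp (v j) (μa j) := by
    intro j
    simp only [← interp_sub_mul]
    refine isMinOn_interp_of_steps _ (hbox j) (fun s hs hsμ => ?_) (fun s hs hμs => ?_) (hboxa j)
    · refine (MC_succ_le_iff (hv j s hs)).1 ((hthresh j (s + 1) (by omega) hs).1 ?_)
      push_cast; linarith
    · exact (le_MC_succ_iff (hv j s hs)).1 ((hthresh j (s + 1) (by omega) hs).2 (by exact_mod_cast hμs))
  have hsum := Finset.sum_le_sum fun j (_ : j ∈ Finset.univ) => hmin j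
  simp only [Finset.sum_sub_distrib, ← Finset.mul_sum] at hsum
  have hscaled : (t - T) * ∑ j, interp (v j) (μa j) ≤ (t - T) * ∑ j, interp (v j) (μ j) := by
    linarith
  exact le_of_mul_le_mul_left hscaled (sub_pos.2 ht)

/-- Threshold greedy optimality under a binding ROS constraint: if
`Σ c(μ) = T·Σ v(μ)`, the budget constraint holds at `μ`, and there is a
threshold `t > T` such that every marginal step used by `μ` has `MC ≤ t` and
every unused step has `MC ≥ t`, then `μ` attains the maximum total value among
all feasible fractional strategies. -/
theorem threshold_greedy_optimal_ros_binding
    (m n : ℕ) (c v : Fin m → ℕ → ℝ)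
    (hc0 : ∀ j, c j 0 = 0) (hv0 : ∀ j, v j 0 = 0)
    (hc : ∀ j, ∀ s < n, c j s < c j (s + 1)) (hv : ∀ j, ∀ s < n, v j s < v j (s + 1))
    (hmono : ∀ j, ∀ s, 1 ≤ s → s < n → MC (c j) (v j) s ≤ MC (c j) (v j) (s + 1))
    (B T : ℝ) (hB : 0 ≤ B) (hT : 0 < T)
    (μ : Fin m → ℝ) (hbox : ∀ j, 0 ≤ μ j ∧ μ j ≤ n)
    (hbind : ∑ j, interp (c j) (μ j) = T * ∑ j, interp (v j) (μ j))
    (hbudget : ∑ j, interp (c j) (μ j) ≤ B)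
    (t : ℝ) (ht : T < t)
    (hthresh : ∀ j, ∀ s : ℕ, 1 ≤ s → s ≤ n →
      (((s : ℝ) - 1 < μ j → MC (c j) (v j) s ≤ t) ∧
        (μ j < (s : ℝ) → t ≤ MC (c j) (v j) s)))
    (μa : Fin m → ℝ) (hboxa : ∀ j, 0 ≤ μa j ∧ μa j ≤ n)
    (hrosa : ∑ j, interp (c j) (μa j) ≤ T * ∑ j, interp (v j) (μa j))
    (hBa : ∑ j, interp (c j) (μa j) ≤ B) :
    ∑ j, interp (v j) (μa j) ≤ ∑ j, interp (v j) (μ j) :=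
  threshold_greedy_optimal_ros_binding_general m n c v hv T μ hbox hbind t ht hthresh μa hboxa hrosa
end
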